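/- arXiv:1512.02381 — 3 statements merged into one kernel-verified Lean document; each statement's English description precedes it below -/
import Mathlib

section
/- For every finite graph G and every subset S of its vertices, the boxicity of G is at most the boxicity of G − S plus the cardinality of S, i.e. box(G) ≤ box(G − S) + |S|. -/
/-- `lo, hi : V → Fin d → ℝ` give a `d`-box representation of `G`. -/
def IsBoxRep {V : Type*} {d : ℕ} (G : SimpleGraph V) (lo hi : V → Fin d → ℝ) : Prop :=
  (∀ v, lo v ≤ hi v) ∧
    ∀ u v : V, u ≠ v →
      (G.Adj u v ↔ (Set.Icc (lo u) (hi u) ∩ Set.Icc (lo v) (hi v)).Nonempty)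

/-- `G` has a `d`-box representation. -/
def HasBoxRep {V : Type*} (G : SimpleGraph V) (d : ℕ) : Prop :=
  ∃ lo hi : V → Fin d → ℝ, IsBoxRep G lo hi

/-- The boxicity of `G`: the least `d` such that `G` has a `d`-box representation. -/
noncomputable def boxicity {V : Type*} (G : SimpleGraph V) : ℕ :=
  sInf {d | HasBoxRep G d}

/-!
`G` is the intersection of `G ⊔ Kᶜ` and `G ⊔ K`, where `K` is the complete graph on `V \ S`.
In `G ⊔ Kᶜ` every vertex of `S` is universal, so a box representation of `G - S` extends to it
by giving each vertex of `S` a box containing all the others. The graph `G ⊔ K` is the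
intersection, over `s ∈ S`, of the interval graphs in which only the non-neighbours of `s` are
non-adjacent to `s`. Intersecting graphs concatenates the coordinates of their representations,
so the dimensions add up to `box(G - S) + |S|`.
-/

namespace SimpleGraph

variable {V : Type*}

def cliqueOn (T : Set V) : SimpleGraph V := fromEdgeSet T.sym2

@[simp]
theorem cliqueOn_adj {T : Set V} {u v : V} : (cliqueOn T).Adj u v ↔ u ∈ T ∧ v ∈ T ∧ u ≠ v := by
  simp [cliqueOn, and_assoc]

@[simp]
theorem cliqueOn_empty : cliqueOn (∅ : Set V) = ⊥ := by
  ext; simp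

theorem iInf_cliqueOn {ι : Type*} (T : ι → Set V) : ⨅ i, cliqueOn (T i) = cliqueOn (⋂ i, T i) := by
  ext u v
  simp only [iInf_adj, cliqueOn_adj, Set.mem_iInter]
  grind

theorem sup_cliqueOn_compl_eq_iInf (G : SimpleGraph V) (S : Set V) :
    G ⊔ cliqueOn Sᶜ = ⨅ s : S, G ⊔ cliqueOn {(s : V)}ᶜ := by
  rw [← sup_iInf_eq, iInf_cliqueOn, ← Set.compl_iUnion, Set.iUnion_singleton_eq_range,
    Subtype.range_coe]

end SimpleGraph

/-- In a lattice, `lo u ≤ hi v ∧ lo v ≤ hi u` says that the intervals `[lo u, hi u]` and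
`[lo v, hi v]` meet. -/
def IsIntervalRep {V α : Type*} [Preorder α] (G : SimpleGraph V) (lo hi : V → α) : Prop :=
  (∀ v, lo v ≤ hi v) ∧ ∀ u v, u ≠ v → (G.Adj u v ↔ lo u ≤ hi v ∧ lo v ≤ hi u)

namespace IsIntervalRep

variable {V : Type*} {G H : SimpleGraph V}

theorem inf {α β : Type*} [Preorder α] [Preorder β] {lo hi : V → α} {lo' hi' : V → β}
    (h : IsIntervalRep G lo hi) (h' : IsIntervalRep H lo' hi') :
    IsIntervalRep (G ⊓ H) (fun v ↦ (lo v, lo' v)) (fun v ↦ (hi v, hi' v)) :=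
  ⟨fun v ↦ ⟨h.1 v, h'.1 v⟩, fun u v huv ↦ by
    simp only [SimpleGraph.inf_adj, h.2 u v huv, h'.2 u v huv, Prod.mk_le_mk]
    tauto⟩

theorem iInf {ι : Type*} {α : ι → Type*} [∀ i, Preorder (α i)] {G : ι → SimpleGraph V}
    {lo hi : ∀ i, V → α i} (h : ∀ i, IsIntervalRep (G i) (lo i) (hi i)) :
    IsIntervalRep (⨅ i, G i) (fun v i ↦ lo i v) (fun v i ↦ hi i v) :=
  ⟨fun v i ↦ (h i).1 v, fun u v huv ↦ by
    simp only [SimpleGraph.iInf_adj, (h _).2 u v huv, Pi.le_def, forall_and]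
    tauto⟩

theorem comp {α β : Type*} [Preorder α] [Preorder β] {lo hi : V → α}
    (h : IsIntervalRep G lo hi) (e : α ↪o β) : IsIntervalRep G (e ∘ lo) (e ∘ hi) :=
  ⟨fun v ↦ e.le_iff_le.2 (h.1 v), fun u v huv ↦ by simp [h.2 u v huv]⟩

open SimpleGraph in
theorem sup_compl_cliqueOn {α : Type*} [Lattice α] [Nonempty α] {S : Set V} [Finite ↥Sᶜ]
    {lo hi : ↥Sᶜ → α} (h : IsIntervalRep (G.induce Sᶜ) lo hi) :
    ∃ lo' hi' : V → α, IsIntervalRep (G ⊔ (cliqueOn Sᶜ)ᶜ) lo' hi' := by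
  classical
  obtain ⟨a, ha⟩ := Finite.exists_ge lo
  obtain ⟨b, hb⟩ := Finite.exists_le hi
  let lo' : V → α := fun v ↦ if hv : v ∈ S then a ⊓ b else lo ⟨v, hv⟩
  let hi' : V → α := fun v ↦ if hv : v ∈ S then b else hi ⟨v, hv⟩
  have hlo' v : a ⊓ b ≤ lo' v := by
    unfold lo'; split_ifs
    exacts [le_rfl, inf_le_left.trans (ha _)]
  have hhi' v : hi' v ≤ b := by
    unfold hi'; split_ifs
    exacts [le_rfl, hb _]
  have hle v : lo' v ≤ hi' v := by
    unfold lo' hi'; split_ifs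
    exacts [inf_le_right, h.1 _]
  refine ⟨lo', hi', hle, fun u v huv ↦ ?_⟩
  by_cases hu : u ∈ S
  · have hlo : lo' u = a ⊓ b := dif_pos hu
    have hhi : hi' u = b := dif_pos hu
    refine iff_of_true (Or.inr (by simp [hu, huv])) ⟨?_, ?_⟩
    · exact hlo ▸ (hlo' v).trans (hle v)
    · exact hhi ▸ (hle v).trans (hhi' v)
  by_cases hv : v ∈ S
  · have hlo : lo' v = a ⊓ b := dif_pos hv
    have hhi : hi' v = b := dif_pos hv
    refine iff_of_true (Or.inr (by simp [hv, huv])) ⟨?_, ?_⟩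
    · exact hhi ▸ (hle u).trans (hhi' u)
    · exact hlo ▸ (hlo' u).trans (hle u)
  have hG : G.Adj u v ↔ (G.induce Sᶜ).Adj ⟨u, hu⟩ ⟨v, hv⟩ := Iff.rfl
  simpa [hu, hv, huv, lo', hi', ← hG] using h.2 ⟨u, hu⟩ ⟨v, hv⟩ (by simpa using huv)

end IsIntervalRep

namespace SimpleGraph

variable {V : Type*} (G : SimpleGraph V)

open Classical in
/-- The vertex `s` gets the interval `{0}`, its neighbours `[0, 1]`, all other vertices `{1}`. -/
theorem isIntervalRep_sup_cliqueOn_compl_singleton (s : V) :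
    IsIntervalRep (G ⊔ cliqueOn {s}ᶜ)
      (fun v ↦ if v = s ∨ G.Adj s v then (0 : ℝ) else 1) (fun v ↦ if v = s then 0 else 1) := by
  refine ⟨fun v ↦ ?_, fun u v huv ↦ ?_⟩ <;> dsimp only
  · split_ifs <;> norm_num; tauto
  rcases eq_or_ne u s with rfl | hu
  · simp only [sup_adj, cliqueOn_adj]
    split_ifs <;> simp_all
  rcases eq_or_ne v s with rfl | hv
  · simp only [sup_adj, cliqueOn_adj]
    split_ifs <;> simp_all [G.adj_comm]
  refine iff_of_true (Or.inr (cliqueOn_adj.2 ⟨hu, hv, huv⟩)) ⟨?_, ?_⟩ <;> split_ifs <;> norm_num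

theorem isIntervalRep_sup_cliqueOn_compl (S : Set V) :
    ∃ lo hi : V → S → ℝ, IsIntervalRep (G ⊔ cliqueOn Sᶜ) lo hi := by
  rw [sup_cliqueOn_compl_eq_iInf]
  exact ⟨_, _, IsIntervalRep.iInf fun s : S ↦ G.isIntervalRep_sup_cliqueOn_compl_singleton s⟩

end SimpleGraph

section BoxRep

variable {V : Type*} {G : SimpleGraph V}

theorem isBoxRep_iff_isIntervalRep {d : ℕ} {lo hi : V → Fin d → ℝ} :
    IsBoxRep G lo hi ↔ IsIntervalRep G lo hi := by
  refine and_congr_right fun hle ↦ forall₂_congr fun u v ↦ imp_congr_right fun _ ↦ ?_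
  rw [Set.Icc_inter_Icc, Set.nonempty_Icc, sup_le_iff, le_inf_iff, le_inf_iff]
  have := hle u
  have := hle v
  tauto

theorem hasBoxRep_of_isIntervalRep {ι : Type*} [Finite ι] {lo hi : V → ι → ℝ}
    (h : IsIntervalRep G lo hi) : HasBoxRep G (Nat.card ι) := by
  let e := Finite.equivFin ι
  let f : (ι → ℝ) ↪o (Fin (Nat.card ι) → ℝ) :=
    OrderEmbedding.ofMapLEIff (fun x ↦ x ∘ e.symm) fun x y ↦ by
      simp [Pi.le_def, e.symm.surjective.forall]
  exact ⟨_, _, isBoxRep_iff_isIntervalRep.2 (h.comp f)⟩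

theorem hasBoxRep_of_isIntervalRep_prod {ι κ : Type*} [Finite ι] [Finite κ]
    {lo hi : V → (ι → ℝ) × (κ → ℝ)} (h : IsIntervalRep G lo hi) :
    HasBoxRep G (Nat.card ι + Nat.card κ) := by
  let f : (ι → ℝ) × (κ → ℝ) ↪o (ι ⊕ κ → ℝ) :=
    OrderEmbedding.ofMapLEIff (fun x ↦ Sum.elim x.1 x.2) fun x y ↦ by
      simp [Pi.le_def, Sum.forall, Prod.le_def]
  rw [← Nat.card_sum]
  exact hasBoxRep_of_isIntervalRep (h.comp f)

end BoxRep

theorem hasBoxRep_boxicity {V : Type*} [Finite V] (G : SimpleGraph V) :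
    HasBoxRep G (boxicity G) := by
  obtain ⟨lo, hi, h⟩ := G.isIntervalRep_sup_cliqueOn_compl Set.univ
  rw [Set.compl_univ, SimpleGraph.cliqueOn_empty, sup_bot_eq] at h
  exact Nat.sInf_mem (s := {d | HasBoxRep G d}) ⟨_, hasBoxRep_of_isIntervalRep h⟩

/-- For any finite graph `G` and any set `S` of vertices,
`box(G) ≤ box(G - S) + |S|`. -/
theorem boxicity_le_boxicity_delete_add {V : Type*} [Fintype V] (G : SimpleGraph V)
    (S : Set V) :
    boxicity G ≤ boxicity (G.induce Sᶜ) + S.ncard := by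
  obtain ⟨lo, hi, hrep⟩ := hasBoxRep_boxicity (G.induce Sᶜ)
  obtain ⟨lo₁, hi₁, h₁⟩ := (isBoxRep_iff_isIntervalRep.1 hrep).sup_compl_cliqueOn
  obtain ⟨lo₂, hi₂, h₂⟩ := G.isIntervalRep_sup_cliqueOn_compl S
  have h := h₁.inf h₂
  rw [← sup_inf_left, inf_comm, inf_compl_eq_bot, sup_bot_eq] at h
  have hG := hasBoxRep_of_isIntervalRep_prod h
  rw [Nat.card_fin, Nat.card_coe_set_eq] at hG
  exact Nat.sInf_le hG
end

section
/- Let G be a finite graph whose vertex set is partitioned into two sets C and R, such that C induces a chordless cycle of length 4 or 5 in G and R induces a complete graph in G (the edges between C and R being arbitrary). Then G has boxicity at most 3. -/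
/-!
Put the boxes of the cycle around a common core so that, for every set `S` of cycle vertices,
some box containing the core meets exactly the cycle boxes of `S`. Each vertex of the clique
then receives the box of its set of neighbours on the cycle; these boxes pairwise meet because
they share the core. For the `4`-cycle (left, bottom, right and top strips of a square) two
dimensions suffice; for the `5`-cycle three do. All corners are natural numbers, so every
finite check is done by `decide`.
-/

open Function SimpleGraph

instance Pi.decidableLEOfFintype {ι α : Type*} [Fintype ι] [LE α] [DecidableLE α] :
    DecidableLE (ι → α) :=
  fun a b => inferInstanceAs (Decidable (∀ i, a i ≤ b i))

lemma HasBoxRep.boxicity_le {V : Type*} {G : SimpleGraph V} {d : ℕ} (h : HasBoxRep G d) :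
    boxicity G ≤ d :=
  Nat.sInf_le h

lemma hasBoxRep_of_nat {V : Type*} {d : ℕ} (G : SimpleGraph V) (lo hi : V → Fin d → ℕ)
    (hle : ∀ v, lo v ≤ hi v)
    (hadj : ∀ u v, u ≠ v → (G.Adj u v ↔ lo u ⊔ lo v ≤ hi u ⊓ hi v)) :
    HasBoxRep G d := by
  refine ⟨fun v t => lo v t, fun v t => hi v t, fun v t => Nat.cast_le.mpr (hle v t),
    fun u v huv => ?_⟩
  rw [hadj u v huv, Set.Icc_inter_Icc, Set.nonempty_Icc]
  simp [Pi.le_def]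

/-- Boxes in `ℕ^d` representing `H`, together with a box for every pattern `S : ι → Bool` that
meets the box of `i` exactly when `S i`, the pattern boxes pairwise meeting. -/
structure CliqueExtensibleBoxRep {ι : Type*} (H : SimpleGraph ι) (d : ℕ) where
  lo : ι → Fin d → ℕ
  hi : ι → Fin d → ℕ
  patternLo : (ι → Bool) → Fin d → ℕ
  patternHi : (ι → Bool) → Fin d → ℕ
  lo_le_hi : ∀ i, lo i ≤ hi i
  adj_iff : ∀ i j, i ≠ j → (H.Adj i j ↔ lo i ⊔ lo j ≤ hi i ⊓ hi j)
  meets_pattern_iff : ∀ S i, S i = true ↔ lo i ⊔ patternLo S ≤ hi i ⊓ patternHi S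
  patterns_meet : ∀ S T, patternLo S ⊔ patternLo T ≤ patternHi S ⊓ patternHi T

namespace CliqueExtensibleBoxRep

variable {ι V : Type*} {H : SimpleGraph ι} {d : ℕ}

lemma patternLo_le_patternHi (R : CliqueExtensibleBoxRep H d) (S : ι → Bool) :
    R.patternLo S ≤ R.patternHi S := by
  simpa using R.patterns_meet S S

theorem hasBoxRep (R : CliqueExtensibleBoxRep H d) (G : SimpleGraph V) (f : ι → V)
    (hf : Injective f) (hH : ∀ i j, G.Adj (f i) (f j) ↔ H.Adj i j)
    (hclique : ∀ u w, u ∉ Set.range f → w ∉ Set.range f → u ≠ w → G.Adj u w) :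
    HasBoxRep G d := by
  classical
  let pattern (v : V) : ι → Bool := fun i => decide (G.Adj v (f i))
  have hlo_out {v : V} (hv : v ∉ Set.range f) :
      extend f R.lo (R.patternLo ∘ pattern) v = R.patternLo (pattern v) :=
    extend_apply' _ _ _ hv
  have hhi_out {v : V} (hv : v ∉ Set.range f) :
      extend f R.hi (R.patternHi ∘ pattern) v = R.patternHi (pattern v) :=
    extend_apply' _ _ _ hv
  have hmixed (i : ι) {v : V} (hv : v ∉ Set.range f) :
      G.Adj (f i) v ↔ R.lo i ⊔ R.patternLo (pattern v) ≤ R.hi i ⊓ R.patternHi (pattern v) := by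
    rw [← R.meets_pattern_iff, G.adj_comm, decide_eq_true_iff]
  refine hasBoxRep_of_nat G (extend f R.lo (R.patternLo ∘ pattern))
    (extend f R.hi (R.patternHi ∘ pattern)) (fun v => ?_) (fun u v huv => ?_)
  · by_cases hv : v ∈ Set.range f
    · obtain ⟨i, rfl⟩ := hv
      simpa only [hf.extend_apply] using R.lo_le_hi i
    · simpa only [hlo_out hv, hhi_out hv] using R.patternLo_le_patternHi (pattern v)
  · by_cases hu : u ∈ Set.range f <;> by_cases hv : v ∈ Set.range f
    · obtain ⟨i, rfl⟩ := hu
      obtain ⟨j, rfl⟩ := hv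
      rw [hH, hf.extend_apply, hf.extend_apply, hf.extend_apply, hf.extend_apply]
      exact R.adj_iff i j (ne_of_apply_ne f huv)
    · obtain ⟨i, rfl⟩ := hu
      rw [hf.extend_apply, hf.extend_apply, hlo_out hv, hhi_out hv]
      exact hmixed i hv
    · obtain ⟨j, rfl⟩ := hv
      rw [hf.extend_apply, hf.extend_apply, hlo_out hu, hhi_out hu, G.adj_comm, sup_comm,
        inf_comm]
      exact hmixed j hu
    · rw [hlo_out hu, hhi_out hu, hlo_out hv, hhi_out hv]
      exact iff_of_true (hclique u v hu hv huv) (R.patterns_meet _ _)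

def cycleFour : CliqueExtensibleBoxRep (cycleGraph 4) 2 where
  lo := ![![0, 0], ![0, 0], ![4, 0], ![0, 4]]
  hi := ![![1, 5], ![5, 1], ![5, 5], ![5, 5]]
  patternLo S := ![if S 0 then 1 else 2, if S 1 then 1 else 2]
  patternHi S := ![if S 2 then 4 else 3, if S 3 then 4 else 3]
  lo_le_hi := by decide
  adj_iff := by decide
  meets_pattern_iff := by decide
  patterns_meet := by decide

/-- A pattern box reaches vertex `2` only by going up in `x` and down in `z`, and vertex `3` only
by going up to `5` in both `x` and `y`; the intermediate height `4` in `x` lets it meet `2`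
without meeting `3`. -/
def cycleFive : CliqueExtensibleBoxRep (cycleGraph 5) 3 where
  lo := ![![0, 0, 0], ![0, 0, 0], ![4, 0, 0], ![5, 5, 0], ![0, 4, 4]]
  hi := ![![1, 6, 6], ![6, 1, 6], ![6, 6, 1], ![6, 6, 6], ![6, 6, 6]]
  patternLo S := ![if S 0 then 1 else 2, if S 1 then 1 else 2, if S 2 then 1 else 2]
  patternHi S := ![if S 3 then 5 else if S 2 then 4 else 3,
    if S 3 then 5 else if S 4 then 4 else 3, if S 4 then 4 else 3]
  lo_le_hi := by decide
  adj_iff := by decide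
  meets_pattern_iff := by decide
  patterns_meet := by decide

end CliqueExtensibleBoxRep

theorem boxicity_le_three_cycle_clique_general {V : Type*} (G : SimpleGraph V)
    (k : ℕ) (hk : k = 4 ∨ k = 5) (vc : Fin k → V) (hinj : Function.Injective vc)
    (hcyc : ∀ i j : Fin k,
      G.Adj (vc i) (vc j) ↔ (((i : ℕ) + 1) % k = (j : ℕ) ∨ ((j : ℕ) + 1) % k = (i : ℕ)))
    (hclique : ∀ u w : V, u ∉ Set.range vc → w ∉ Set.range vc → u ≠ w → G.Adj u w) :
    boxicity G ≤ 3 := by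
  have hcycle : ∀ i j, G.Adj (vc i) (vc j) ↔ (cycleGraph k).Adj i j := by
    intro i j
    rw [hcyc]
    rcases hk with rfl | rfl <;> revert i j <;> decide
  rcases hk with rfl | rfl
  · calc boxicity G ≤ 2 :=
          (CliqueExtensibleBoxRep.cycleFour.hasBoxRep G vc hinj hcycle hclique).boxicity_le
      _ ≤ 3 := by norm_num
  · exact (CliqueExtensibleBoxRep.cycleFive.hasBoxRep G vc hinj hcycle hclique).boxicity_le

/-- If the vertex set of a finite graph `G` is partitioned into a set
`C = Set.range vc` inducing a chordless cycle of length `4` or `5` (the edges inside `C`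
are exactly the consecutive ones along the cycle) and a set `R = (Set.range vc)ᶜ`
inducing a complete graph, then `G` has boxicity at most `3`. -/
theorem boxicity_le_three_cycle_clique {V : Type*} [Fintype V] (G : SimpleGraph V)
    (k : ℕ) (hk : k = 4 ∨ k = 5) (vc : Fin k → V) (hinj : Function.Injective vc)
    (hcyc : ∀ i j : Fin k,
      G.Adj (vc i) (vc j) ↔ (((i : ℕ) + 1) % k = (j : ℕ) ∨ ((j : ℕ) + 1) % k = (i : ℕ)))
    (hclique : ∀ u w : V, u ∉ Set.range vc → w ∉ Set.range vc → u ≠ w → G.Adj u w) :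
    boxicity G ≤ 3 :=
  boxicity_le_three_cycle_clique_general G k hk vc hinj hcyc hclique
end

section
/- Let G be a finite graph whose vertex set is partitioned into two sets K and C, such that K induces a complete graph in G, C induces a chordless cycle in G, and for every vertex u of K, all the neighbors of u in C lie on a subpath of the cycle C with at most 3 vertices. Then G has boxicity at most 4. -/
def rA (k x : ℕ) : ℕ := if x = 0 then 3*k else if x % 2 = 1 then x else k + x

def rB (k x : ℕ) : ℕ :=
  if x = 0 then 3*k+2 else if x = k-1 then 3*k+1 else if x = 1 then 3*k
  else if x % 2 = 1 then k + x else x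

lemma rA_le (k x : ℕ) (hx : x < k) : rA k x ≤ 4*k := by unfold rA; split_ifs <;> omega

lemma rB_le (k x : ℕ) (hk : 3 ≤ k) (hx : x < k) : rB k x ≤ 4*k := by
  unfold rB; split_ifs <;> omega

lemma rA_lt_odd_even (k i j : ℕ) (hik : i < k) (hio : i % 2 = 1) (hje : j % 2 = 0) :
    rA k i < rA k j := by unfold rA; split_ifs <;> omega

lemma rA_lt_lt (k i j : ℕ) (hio : i % 2 = 1) (hjo : j % 2 = 1) (hij : i < j) :
    rA k i < rA k j := by unfold rA; split_ifs <;> omega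

lemma rB_lt_even_odd (k i j : ℕ) (hik : i < k) (hie : i % 2 = 0) (hi0 : i ≠ 0)
    (hik1 : i ≠ k - 1) (hjo : j % 2 = 1) : rB k i < rB k j := by
  unfold rB; split_ifs <;> omega

lemma rB_lt_lt (k i j : ℕ) (hie : i % 2 = 0) (hi0 : i ≠ 0) (hik1 : i ≠ k - 1)
    (hje : j % 2 = 0) (hj0 : j ≠ 0) (hjk1 : j ≠ k - 1) (hij : i < j) :
    rB k i < rB k j := by unfold rB; split_ifs <;> omega

lemma rB_lt_hi (k i j : ℕ) (hik : i < k) (hi0 : i ≠ 0) (hik1 : i ≠ k - 1)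
    (hj : (j = 0 ∨ j = k - 1) ∨ (i ≠ 1 ∧ j = 1)) : rB k i < rB k j := by
  unfold rB; split_ifs <;> omega

lemma vmk0 {α : Type*} (a b c d : α) (h : (0:ℕ) < 4) : ![a,b,c,d] (⟨0,h⟩ : Fin 4) = a := rfl
lemma vmk1 {α : Type*} (a b c d : α) (h : (1:ℕ) < 4) : ![a,b,c,d] (⟨1,h⟩ : Fin 4) = b := rfl
lemma vmk2 {α : Type*} (a b c d : α) (h : (2:ℕ) < 4) : ![a,b,c,d] (⟨2,h⟩ : Fin 4) = c := rfl
lemma vmk3 {α : Type*} (a b c d : α) (h : (3:ℕ) < 4) : ![a,b,c,d] (⟨3,h⟩ : Fin 4) = d := rfl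
lemma vl0 {α : Type*} (a b c d : α) : ![a,b,c,d] (0 : Fin 4) = a := rfl
lemma vl1 {α : Type*} (a b c d : α) : ![a,b,c,d] (1 : Fin 4) = b := rfl
lemma vl2 {α : Type*} (a b c d : α) : ![a,b,c,d] (2 : Fin 4) = c := rfl
lemma vl3 {α : Type*} (a b c d : α) : ![a,b,c,d] (3 : Fin 4) = d := rfl

lemma key_aux (k i : ℕ) (hk : 3 ≤ k) (hi : i < k) (a b c : ℕ)
    (ha : a < k) (hb : b < k) (hc : c < k)
    (hwin : (b = a + 1 ∧ c = a + 2 ∧ a + 2 < k) ∨ (a = k - 2 ∧ b = k - 1 ∧ c = 0) ∨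
      (a = k - 1 ∧ b = 0 ∧ c = 1))
    (S : Finset ℕ) (hS : ∀ j ∈ S, j = a ∨ j = b ∨ j = c) (hiS : i ∉ S) :
    (∀ j ∈ S, i < j) ∨ (∀ j ∈ S, j < i) ∨
      (∀ j ∈ S, rA k i < rA k j) ∨ (∀ j ∈ S, rB k i < rB k j) := by
  rcases hwin with ⟨hb', hc', hlt⟩ | ⟨ha', hb', hc'⟩ | ⟨ha', hb', hc'⟩
  · -- window a, a+1, a+2 with a+2 < k
    subst hb' hc'
    by_cases hgap : a ∈ S ∧ a + 2 ∈ S ∧ i = a + 1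
    · obtain ⟨h1, h3, rfl⟩ := hgap
      have h2 : a + 1 ∉ S := hiS
      by_cases hp : a % 2 = 0
      · refine Or.inr (Or.inr (Or.inl ?_))
        intro j hj
        rcases hS j hj with rfl | rfl | rfl
        · exact rA_lt_odd_even k _ _ (by omega) (by omega) (by omega)
        · exact absurd hj h2
        · exact rA_lt_odd_even k _ _ (by omega) (by omega) (by omega)
      · refine Or.inr (Or.inr (Or.inr ?_))
        intro j hj
        rcases hS j hj with rfl | rfl | rfl
        · exact rB_lt_even_odd k _ _ (by omega) (by omega) (by omega) (by omega) (by omega)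
        · exact absurd hj h2
        · exact rB_lt_even_odd k _ _ (by omega) (by omega) (by omega) (by omega) (by omega)
    · rcases (by omega : i < a ∨ a + 2 < i ∨ i = a ∨ i = a + 1 ∨ i = a + 2) with h | h | h | h | h
      · exact Or.inl fun j hj => by rcases hS j hj with rfl | rfl | rfl <;> omega
      · exact Or.inr (Or.inl fun j hj => by rcases hS j hj with rfl | rfl | rfl <;> omega)
      · subst h
        refine Or.inl fun j hj => ?_
        rcases hS j hj with rfl | rfl | rfl
        · exact absurd hj hiS
        · omega
        · omega
      · subst h
        by_cases h1 : a ∈ S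
        · have h3 : a + 2 ∉ S := fun hmem => hgap ⟨h1, hmem, rfl⟩
          refine Or.inr (Or.inl fun j hj => ?_)
          rcases hS j hj with rfl | rfl | rfl
          · omega
          · exact absurd hj hiS
          · exact absurd hj h3
        · refine Or.inl fun j hj => ?_
          rcases hS j hj with rfl | rfl | rfl
          · exact absurd hj h1
          · exact absurd hj hiS
          · omega
      · subst h
        refine Or.inr (Or.inl fun j hj => ?_)
        rcases hS j hj with rfl | rfl | rfl
        · omega
        · omega
        · exact absurd hj hiS
  · -- window k-2, k-1, 0
    subst ha' hb' hc'
    by_cases h1 : k - 2 ∈ S <;> by_cases h2 : k - 1 ∈ S <;> by_cases h3 : (0:ℕ) ∈ S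
    · have hn1 : i ≠ k - 2 := fun e => hiS (e ▸ h1)
      have hn2 : i ≠ k - 1 := fun e => hiS (e ▸ h2)
      have hn3 : i ≠ 0 := fun e => hiS (e ▸ h3)
      by_cases hp : i % 2 = 1
      · refine Or.inr (Or.inr (Or.inl ?_))
        intro j hj
        rcases hS j hj with rfl | rfl | rfl
        · by_cases hkp : k % 2 = 0
          · exact rA_lt_odd_even k _ _ hi hp (by omega)
          · exact rA_lt_lt k _ _ hp (by omega) (by omega)
        · by_cases hkp : k % 2 = 0
          · exact rA_lt_lt k _ _ hp (by omega) (by omega)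
          · exact rA_lt_odd_even k _ _ hi hp (by omega)
        · exact rA_lt_odd_even k _ _ hi hp (by omega)
      · refine Or.inr (Or.inr (Or.inr ?_))
        intro j hj
        rcases hS j hj with rfl | rfl | rfl
        · by_cases hkp : k % 2 = 0
          · exact rB_lt_lt k _ _ (by omega) hn3 hn2 (by omega) (by omega) (by omega) (by omega)
          · exact rB_lt_even_odd k _ _ hi (by omega) hn3 hn2 (by omega)
        · exact rB_lt_hi k _ _ hi hn3 hn2 (Or.inl (Or.inr rfl))
        · exact rB_lt_hi k _ _ hi hn3 hn2 (Or.inl (Or.inl rfl))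
    · have hn1 : i ≠ k - 2 := fun e => hiS (e ▸ h1)
      have hn2 : i ≠ k - 1 := fun e => hiS (e ▸ h2)
      refine Or.inl fun j hj => ?_
      rcases hS j hj with rfl | rfl | rfl
      · omega
      · omega
      · exact absurd hj h3
    · have hn1 : i ≠ k - 2 := fun e => hiS (e ▸ h1)
      have hn3 : i ≠ 0 := fun e => hiS (e ▸ h3)
      rcases (by omega : i = k - 1 ∨ i < k - 2) with h | h
      · refine Or.inr (Or.inl fun j hj => ?_)
        rcases hS j hj with rfl | rfl | rfl
        · omega
        · exact absurd hj h2
        · omega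
      · by_cases hp : i % 2 = 1
        · refine Or.inr (Or.inr (Or.inl ?_))
          intro j hj
          rcases hS j hj with rfl | rfl | rfl
          · by_cases hkp : k % 2 = 0
            · exact rA_lt_odd_even k _ _ hi hp (by omega)
            · exact rA_lt_lt k _ _ hp (by omega) (by omega)
          · exact absurd hj h2
          · exact rA_lt_odd_even k _ _ hi hp (by omega)
        · refine Or.inr (Or.inr (Or.inr ?_))
          intro j hj
          rcases hS j hj with rfl | rfl | rfl
          · by_cases hkp : k % 2 = 0
            · exact rB_lt_lt k _ _ (by omega) hn3 (by omega) (by omega) (by omega) (by omega)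
                (by omega)
            · exact rB_lt_even_odd k _ _ hi (by omega) hn3 (by omega) (by omega)
          · exact absurd hj h2
          · exact rB_lt_hi k _ _ hi hn3 (by omega) (Or.inl (Or.inl rfl))
    · have hn1 : i ≠ k - 2 := fun e => hiS (e ▸ h1)
      rcases (by omega : i < k - 2 ∨ k - 2 < i) with h | h
      · refine Or.inl fun j hj => ?_
        rcases hS j hj with rfl | rfl | rfl
        · omega
        · exact absurd hj h2
        · exact absurd hj h3
      · refine Or.inr (Or.inl fun j hj => ?_)
        rcases hS j hj with rfl | rfl | rfl
        · omega
        · exact absurd hj h2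
        · exact absurd hj h3
    · have hn2 : i ≠ k - 1 := fun e => hiS (e ▸ h2)
      have hn3 : i ≠ 0 := fun e => hiS (e ▸ h3)
      refine Or.inr (Or.inr (Or.inr ?_))
      intro j hj
      rcases hS j hj with rfl | rfl | rfl
      · exact absurd hj h1
      · exact rB_lt_hi k _ _ hi hn3 hn2 (Or.inl (Or.inr rfl))
      · exact rB_lt_hi k _ _ hi hn3 hn2 (Or.inl (Or.inl rfl))
    · have hn2 : i ≠ k - 1 := fun e => hiS (e ▸ h2)
      refine Or.inl fun j hj => ?_
      rcases hS j hj with rfl | rfl | rfl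
      · exact absurd hj h1
      · omega
      · exact absurd hj h3
    · have hn3 : i ≠ 0 := fun e => hiS (e ▸ h3)
      refine Or.inr (Or.inl fun j hj => ?_)
      rcases hS j hj with rfl | rfl | rfl
      · exact absurd hj h1
      · exact absurd hj h2
      · omega
    · refine Or.inl fun j hj => ?_
      rcases hS j hj with rfl | rfl | rfl
      · exact absurd hj h1
      · exact absurd hj h2
      · exact absurd hj h3
  · -- window k-1, 0, 1
    subst ha' hb' hc'
    by_cases h1 : k - 1 ∈ S <;> by_cases h2 : (0:ℕ) ∈ S <;> by_cases h3 : (1:ℕ) ∈ S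
    · have hn1 : i ≠ k - 1 := fun e => hiS (e ▸ h1)
      have hn2 : i ≠ 0 := fun e => hiS (e ▸ h2)
      have hn3 : i ≠ 1 := fun e => hiS (e ▸ h3)
      refine Or.inr (Or.inr (Or.inr ?_))
      intro j hj
      rcases hS j hj with rfl | rfl | rfl
      · exact rB_lt_hi k _ _ hi hn2 hn1 (Or.inl (Or.inr rfl))
      · exact rB_lt_hi k _ _ hi hn2 hn1 (Or.inl (Or.inl rfl))
      · exact rB_lt_hi k _ _ hi hn2 hn1 (Or.inr ⟨hn3, rfl⟩)
    · have hn1 : i ≠ k - 1 := fun e => hiS (e ▸ h1)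
      have hn2 : i ≠ 0 := fun e => hiS (e ▸ h2)
      refine Or.inr (Or.inr (Or.inr ?_))
      intro j hj
      rcases hS j hj with rfl | rfl | rfl
      · exact rB_lt_hi k _ _ hi hn2 hn1 (Or.inl (Or.inr rfl))
      · exact rB_lt_hi k _ _ hi hn2 hn1 (Or.inl (Or.inl rfl))
      · exact absurd hj h3
    · have hn1 : i ≠ k - 1 := fun e => hiS (e ▸ h1)
      have hn3 : i ≠ 1 := fun e => hiS (e ▸ h3)
      rcases (by omega : i = 0 ∨ 2 ≤ i) with h | h
      · refine Or.inl fun j hj => ?_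
        rcases hS j hj with rfl | rfl | rfl
        · omega
        · exact absurd hj h2
        · omega
      · refine Or.inr (Or.inr (Or.inr ?_))
        intro j hj
        rcases hS j hj with rfl | rfl | rfl
        · exact rB_lt_hi k _ _ hi (by omega) hn1 (Or.inl (Or.inr rfl))
        · exact absurd hj h2
        · exact rB_lt_hi k _ _ hi (by omega) hn1 (Or.inr ⟨hn3, rfl⟩)
    · have hn1 : i ≠ k - 1 := fun e => hiS (e ▸ h1)
      refine Or.inl fun j hj => ?_
      rcases hS j hj with rfl | rfl | rfl
      · omega
      · exact absurd hj h2
      · exact absurd hj h3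
    · have hn2 : i ≠ 0 := fun e => hiS (e ▸ h2)
      have hn3 : i ≠ 1 := fun e => hiS (e ▸ h3)
      refine Or.inr (Or.inl fun j hj => ?_)
      rcases hS j hj with rfl | rfl | rfl
      · exact absurd hj h1
      · omega
      · omega
    · have hn2 : i ≠ 0 := fun e => hiS (e ▸ h2)
      refine Or.inr (Or.inl fun j hj => ?_)
      rcases hS j hj with rfl | rfl | rfl
      · exact absurd hj h1
      · omega
      · exact absurd hj h3
    · have hn3 : i ≠ 1 := fun e => hiS (e ▸ h3)
      rcases (by omega : i = 0 ∨ 2 ≤ i) with h | h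
      · refine Or.inl fun j hj => ?_
        rcases hS j hj with rfl | rfl | rfl
        · exact absurd hj h1
        · exact absurd hj h2
        · omega
      · refine Or.inr (Or.inl fun j hj => ?_)
        rcases hS j hj with rfl | rfl | rfl
        · exact absurd hj h1
        · exact absurd hj h2
        · omega
    · refine Or.inl fun j hj => ?_
      rcases hS j hj with rfl | rfl | rfl
      · exact absurd hj h1
      · exact absurd hj h2
      · exact absurd hj h3

lemma key (k i₀ i : ℕ) (hk : 3 ≤ k) (hi₀ : i₀ < k) (hi : i < k)
    (S : Finset ℕ)
    (hS : ∀ j ∈ S, j = i₀ ∨ j = (i₀ + 1) % k ∨ j = (i₀ + 2) % k)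
    (hiS : i ∉ S) :
    (∀ j ∈ S, i < j) ∨ (∀ j ∈ S, j < i) ∨
      (∀ j ∈ S, rA k i < rA k j) ∨ (∀ j ∈ S, rB k i < rB k j) := by
  rcases (by omega : i₀ + 2 < k ∨ i₀ + 2 = k ∨ i₀ + 1 = k) with hw | hw | hw
  · have e1 : (i₀ + 1) % k = i₀ + 1 := Nat.mod_eq_of_lt (by omega)
    have e2 : (i₀ + 2) % k = i₀ + 2 := Nat.mod_eq_of_lt (by omega)
    rw [e1, e2] at hS
    exact key_aux k i hk hi i₀ (i₀+1) (i₀+2) (by omega) (by omega) (by omega)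
      (Or.inl ⟨rfl, rfl, by omega⟩) S hS hiS
  · have e1 : (i₀ + 1) % k = k - 1 := by rw [Nat.mod_eq_of_lt (by omega)]; omega
    have e2 : (i₀ + 2) % k = 0 := by rw [hw]; exact Nat.mod_self k
    rw [e1, e2] at hS
    exact key_aux k i hk hi i₀ (k-1) 0 (by omega) (by omega) (by omega)
      (Or.inr (Or.inl ⟨by omega, rfl, rfl⟩)) S hS hiS
  · have e1 : (i₀ + 1) % k = 0 := by rw [hw]; exact Nat.mod_self k
    have e2 : (i₀ + 2) % k = 1 := by
      rw [show i₀ + 2 = k + 1 by omega, Nat.add_mod_left]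
      exact Nat.mod_eq_of_lt (by omega)
    rw [e1, e2] at hS
    exact key_aux k i hk hi i₀ 0 1 (by omega) (by omega) (by omega)
      (Or.inr (Or.inr ⟨by omega, rfl, rfl⟩)) S hS hiS

lemma icc_inter_iff {d : ℕ} {a b c e : Fin d → ℝ} (hab : a ≤ b) (hce : c ≤ e) :
    (Set.Icc a b ∩ Set.Icc c e).Nonempty ↔ ∀ t, a t ≤ e t ∧ c t ≤ b t := by
  constructor
  · rintro ⟨x, hx1, hx2⟩ t
    rw [Set.mem_Icc] at hx1 hx2
    exact ⟨le_trans (hx1.1 t) (hx2.2 t), le_trans (hx2.1 t) (hx1.2 t)⟩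
  · intro h
    exact ⟨fun t => max (a t) (c t),
      Set.mem_Icc.mpr ⟨fun t => le_max_left _ _, fun t => max_le (hab t) (h t).2⟩,
      Set.mem_Icc.mpr ⟨fun t => le_max_right _ _, fun t => max_le (h t).1 (hce t)⟩⟩

/-- Let the vertex set of a finite graph `G` be partitioned into a set
`K = (Set.range vc)ᶜ` inducing a complete graph and a set `C = Set.range vc` inducing a
chordless cycle (the edges inside `C` are exactly the consecutive ones along the cycle),
such that for every vertex `u` of `K`, all the neighbors of `u` in `C` lie on a subpath
of the cycle with at most `3` vertices. Then `G` has boxicity at most `4`. -/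
theorem boxicity_le_four_clique_cycle {V : Type*} [Fintype V] (G : SimpleGraph V)
    (k : ℕ) (hk : 3 ≤ k) (vc : Fin k → V) (hinj : Function.Injective vc)
    (hcyc : ∀ i j : Fin k,
      G.Adj (vc i) (vc j) ↔ (((i : ℕ) + 1) % k = (j : ℕ) ∨ ((j : ℕ) + 1) % k = (i : ℕ)))
    (hclique : ∀ u w : V, u ∉ Set.range vc → w ∉ Set.range vc → u ≠ w → G.Adj u w)
    (hnbr : ∀ u : V, u ∉ Set.range vc → ∃ i₀ : Fin k, ∀ i : Fin k, G.Adj u (vc i) →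
      ((i : ℕ) = (i₀ : ℕ) ∨ (i : ℕ) = ((i₀ : ℕ) + 1) % k ∨
        (i : ℕ) = ((i₀ : ℕ) + 2) % k)) :
    boxicity G ≤ 4 := by
  classical
  apply Nat.sInf_le
  have hmodsucc : ∀ a : ℕ, a < k → (a + 1) % k = if a + 1 = k then 0 else a + 1 := by
    intro a ha
    split_ifs with h
    · rw [h, Nat.mod_self]
    · exact Nat.mod_eq_of_lt (by omega)
  set S : V → Finset ℕ := fun u =>
    (Finset.range k).filter fun n => ∃ j : Fin k, (j : ℕ) = n ∧ G.Adj u (vc j) with hSdef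
  have hSmem : ∀ u (j : Fin k), (j : ℕ) ∈ S u ↔ G.Adj u (vc j) := by
    intro u j
    simp only [hSdef, Finset.mem_filter, Finset.mem_range]
    constructor
    · rintro ⟨-, j', hj', hadj⟩
      rwa [show j' = j from Fin.ext hj'] at hadj
    · intro h
      exact ⟨j.isLt, j, rfl, h⟩
  have hSlt : ∀ u n, n ∈ S u → n < k := by
    intro u n hn
    simp only [hSdef, Finset.mem_filter, Finset.mem_range] at hn
    exact hn.1
  have hSadj : ∀ u n, n ∈ S u → ∀ hn : n < k, G.Adj u (vc ⟨n, hn⟩) := by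
    intro u n hn hlt
    simp only [hSdef, Finset.mem_filter, Finset.mem_range] at hn
    obtain ⟨-, j', hj', hadj⟩ := hn
    rwa [show j' = (⟨n, hlt⟩ : Fin k) from Fin.ext hj'] at hadj
  set loN : V → Fin 4 → ℕ := fun v =>
    if h : ∃ j : Fin k, vc j = v then
      ![if (h.choose : ℕ) = k - 1 then 0 else 2 * (h.choose : ℕ), 2 * (h.choose : ℕ), 0, 0]
    else
      ![if hs : (S v).Nonempty then 2 * (S v).min' hs + 1 else 2 * k + 2, 0,
        if hs : (S v).Nonempty then (S v).inf' hs (rA k) else 0,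
        if hs : (S v).Nonempty then (S v).inf' hs (rB k) else 0] with hloNdef
  set hiN : V → Fin 4 → ℕ := fun v =>
    if h : ∃ j : Fin k, vc j = v then
      ![if (h.choose : ℕ) = k - 1 then 2 * k else 2 * (h.choose : ℕ) + 2,
        if (h.choose : ℕ) = 0 then 2 * k else 2 * (h.choose : ℕ) + 2,
        rA k (h.choose : ℕ), rB k (h.choose : ℕ)]
    else
      ![2 * k + 4, if hs : (S v).Nonempty then 2 * (S v).max' hs + 1 else 0, 4 * k, 4 * k]
    with hhiNdef
  have hch : ∀ (j : Fin k) (h : ∃ j' : Fin k, vc j' = vc j), h.choose = j :=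
    fun j h => hinj h.choose_spec
  have loN_cyc : ∀ j : Fin k,
      loN (vc j) = ![if (j : ℕ) = k - 1 then 0 else 2 * (j : ℕ), 2 * (j : ℕ), 0, 0] := by
    intro j
    have h : ∃ j' : Fin k, vc j' = vc j := ⟨j, rfl⟩
    simp only [hloNdef]
    rw [dif_pos h, hch j h]
  have hiN_cyc : ∀ j : Fin k,
      hiN (vc j) = ![if (j : ℕ) = k - 1 then 2 * k else 2 * (j : ℕ) + 2,
        if (j : ℕ) = 0 then 2 * k else 2 * (j : ℕ) + 2, rA k (j : ℕ), rB k (j : ℕ)] := by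
    intro j
    have h : ∃ j' : Fin k, vc j' = vc j := ⟨j, rfl⟩
    simp only [hhiNdef]
    rw [dif_pos h, hch j h]
  have loN_cli : ∀ u, u ∉ Set.range vc → loN u =
      ![if hs : (S u).Nonempty then 2 * (S u).min' hs + 1 else 2 * k + 2, 0,
        if hs : (S u).Nonempty then (S u).inf' hs (rA k) else 0,
        if hs : (S u).Nonempty then (S u).inf' hs (rB k) else 0] := by
    intro u hu
    have h : ¬∃ j : Fin k, vc j = u := fun ⟨j, hj⟩ => hu ⟨j, hj⟩
    simp only [hloNdef]
    rw [dif_neg h]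
  have hiN_cli : ∀ u, u ∉ Set.range vc → hiN u =
      ![2 * k + 4, if hs : (S u).Nonempty then 2 * (S u).max' hs + 1 else 0, 4 * k, 4 * k] := by
    intro u hu
    have h : ¬∃ j : Fin k, vc j = u := fun ⟨j, hj⟩ => hu ⟨j, hj⟩
    simp only [hhiNdef]
    rw [dif_neg h]
  have hminlt : ∀ u (hs : (S u).Nonempty), (S u).min' hs < k :=
    fun u hs => hSlt u _ (Finset.min'_mem _ _)
  have hinfA : ∀ u (hs : (S u).Nonempty), (S u).inf' hs (rA k) ≤ 4 * k := by
    intro u hs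
    obtain ⟨n, hn⟩ := hs
    exact le_trans (Finset.inf'_le _ hn) (rA_le k n (hSlt u n hn))
  have hinfB : ∀ u (hs : (S u).Nonempty), (S u).inf' hs (rB k) ≤ 4 * k := by
    intro u hs
    obtain ⟨n, hn⟩ := hs
    exact le_trans (Finset.inf'_le _ hn) (rB_le k n hk (hSlt u n hn))
  have hlohi : ∀ v t, loN v t ≤ hiN v t := by
    intro v t
    by_cases h : ∃ j : Fin k, vc j = v
    · obtain ⟨j, rfl⟩ := h
      rw [loN_cyc j, hiN_cyc j]
      have hjk := j.isLt
      fin_cases t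
      · simp only [vmk0, vl0]
        split_ifs <;> omega
      · simp only [vmk1, vl1]
        split_ifs <;> omega
      · simp only [vmk2, vl2]
        exact Nat.zero_le _
      · simp only [vmk3, vl3]
        exact Nat.zero_le _
    · have hv : v ∉ Set.range vc := fun ⟨j, hj⟩ => h ⟨j, hj⟩
      rw [loN_cli v hv, hiN_cli v hv]
      fin_cases t
      · simp only [vmk0, vl0]
        split_ifs with hs
        · have := hminlt v hs
          omega
        · omega
      · simp only [vmk1, vl1]
        exact Nat.zero_le _
      · simp only [vmk2, vl2]
        split_ifs with hs
        · exact hinfA v hs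
        · exact Nat.zero_le _
      · simp only [vmk3, vl3]
        split_ifs with hs
        · exact hinfB v hs
        · exact Nat.zero_le _
  show HasBoxRep G 4
  refine ⟨fun v t => (loN v t : ℝ), fun v t => (hiN v t : ℝ), fun v t => ?_, ?_⟩
  · show ((loN v t : ℕ) : ℝ) ≤ ((hiN v t : ℕ) : ℝ)
    exact_mod_cast hlohi v t
  intro u v huv
  rw [icc_inter_iff (fun t => show ((loN u t : ℕ) : ℝ) ≤ ((hiN u t : ℕ) : ℝ) from
      Nat.cast_le.mpr (hlohi u t))
    (fun t => show ((loN v t : ℕ) : ℝ) ≤ ((hiN v t : ℕ) : ℝ) from Nat.cast_le.mpr (hlohi v t))]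
  have hcast : (∀ t : Fin 4, ((loN u t : ℕ) : ℝ) ≤ ((hiN v t : ℕ) : ℝ) ∧
      ((loN v t : ℕ) : ℝ) ≤ ((hiN u t : ℕ) : ℝ)) ↔
      (∀ t : Fin 4, loN u t ≤ hiN v t ∧ loN v t ≤ hiN u t) := by
    constructor
    · intro h t
      exact ⟨Nat.cast_le.mp (h t).1, Nat.cast_le.mp (h t).2⟩
    · intro h t
      exact ⟨Nat.cast_le.mpr (h t).1, Nat.cast_le.mpr (h t).2⟩
  rw [hcast]
  have KC : ∀ w (j : Fin k), w ∉ Set.range vc →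
      (G.Adj w (vc j) ↔ ∀ t : Fin 4, loN w t ≤ hiN (vc j) t ∧ loN (vc j) t ≤ hiN w t) := by
    intro w j hw
    rw [loN_cli w hw, hiN_cli w hw, loN_cyc j, hiN_cyc j]
    have hjk := j.isLt
    constructor
    · intro hadj t
      have hjS : (j : ℕ) ∈ S w := (hSmem w j).mpr hadj
      have hs : (S w).Nonempty := ⟨_, hjS⟩
      have hm1 : (S w).min' hs ≤ (j : ℕ) := Finset.min'_le _ _ hjS
      have hm2 : (j : ℕ) ≤ (S w).max' hs := Finset.le_max' _ _ hjS
      fin_cases t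
      · simp only [vmk0, vl0]
        rw [dif_pos hs]
        constructor
        · split_ifs <;> omega
        · split_ifs <;> omega
      · simp only [vmk1, vl1]
        rw [dif_pos hs]
        constructor
        · split_ifs <;> omega
        · omega
      · simp only [vmk2, vl2]
        rw [dif_pos hs]
        exact ⟨Finset.inf'_le _ hjS, Nat.zero_le _⟩
      · simp only [vmk3, vl3]
        rw [dif_pos hs]
        exact ⟨Finset.inf'_le _ hjS, Nat.zero_le _⟩
    · intro hall
      by_contra hadj
      have hjS : (j : ℕ) ∉ S w := fun h => hadj ((hSmem w j).mp h)
      by_cases hs : (S w).Nonempty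
      · obtain ⟨i₀, hspec⟩ := hnbr w hw
        have hSsub : ∀ n ∈ S w, n = (i₀ : ℕ) ∨ n = ((i₀ : ℕ) + 1) % k ∨
            n = ((i₀ : ℕ) + 2) % k := fun n hn => hspec ⟨n, hSlt w n hn⟩ (hSadj w n hn _)
        rcases key k i₀ j hk i₀.isLt j.isLt (S w) hSsub hjS with hd | hd | hd | hd
        · have h0 := (hall 0).1
          have hmin : (j : ℕ) < (S w).min' hs := (Finset.lt_min'_iff _ hs).mpr hd
          have := hminlt w hs
          simp only [vmk0, vl0] at h0
          rw [dif_pos hs] at h0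
          split_ifs at h0 <;> omega
        · have h1 := (hall 1).2
          have hmax : (S w).max' hs < (j : ℕ) := (Finset.max'_lt_iff _ hs).mpr hd
          simp only [vmk1, vl1] at h1
          rw [dif_pos hs] at h1
          omega
        · have h2 := (hall 2).1
          have hlt : rA k (j : ℕ) < (S w).inf' hs (rA k) := (Finset.lt_inf'_iff hs).mpr hd
          simp only [vmk2, vl2] at h2
          rw [dif_pos hs] at h2
          exact absurd h2 (not_le.mpr hlt)
        · have h3 := (hall 3).1
          have hlt : rB k (j : ℕ) < (S w).inf' hs (rB k) := (Finset.lt_inf'_iff hs).mpr hd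
          simp only [vmk3, vl3] at h3
          rw [dif_pos hs] at h3
          exact absurd h3 (not_le.mpr hlt)
      · have h0 := (hall 0).1
        simp only [vmk0, vl0] at h0
        rw [dif_neg hs] at h0
        split_ifs at h0 <;> omega
  by_cases hu : ∃ jj : Fin k, vc jj = u
  · obtain ⟨i, rfl⟩ := hu
    by_cases hv : ∃ jj : Fin k, vc jj = v
    · obtain ⟨j, rfl⟩ := hv
      have hij : (i : ℕ) ≠ (j : ℕ) := fun h => huv (congrArg vc (Fin.ext h))
      have hik := i.isLt
      have hjk := j.isLt
      rw [hcyc i j, hmodsucc _ i.isLt, hmodsucc _ j.isLt, loN_cyc i, hiN_cyc i, loN_cyc j,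
        hiN_cyc j]
      constructor
      · intro hadj t
        fin_cases t
        · simp only [vmk0, vl0]
          split_ifs at hadj ⊢ <;> omega
        · simp only [vmk1, vl1]
          split_ifs at hadj ⊢ <;> omega
        · simp only [vmk2, vl2]
          exact ⟨Nat.zero_le _, Nat.zero_le _⟩
        · simp only [vmk3, vl3]
          exact ⟨Nat.zero_le _, Nat.zero_le _⟩
      · intro hall
        have h0 := hall 0
        have h1 := hall 1
        simp only [vmk0, vl0] at h0
        simp only [vmk1, vl1] at h1
        split_ifs at h0 h1 ⊢ <;> omega
    · have hvr : v ∉ Set.range vc := fun ⟨jj, hjj⟩ => hv ⟨jj, hjj⟩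
      rw [G.adj_comm, KC v i hvr]
      constructor
      · intro h t
        exact ⟨(h t).2, (h t).1⟩
      · intro h t
        exact ⟨(h t).2, (h t).1⟩
  · have hur : u ∉ Set.range vc := fun ⟨jj, hjj⟩ => hu ⟨jj, hjj⟩
    by_cases hv : ∃ jj : Fin k, vc jj = v
    · obtain ⟨j, rfl⟩ := hv
      exact KC u j hur
    · have hvr : v ∉ Set.range vc := fun ⟨jj, hjj⟩ => hv ⟨jj, hjj⟩
      have hadj := hclique u v hur hvr huv
      refine iff_of_true hadj fun t => ?_
      rw [loN_cli u hur, hiN_cli u hur, loN_cli v hvr, hiN_cli v hvr]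
      fin_cases t
      · simp only [vmk0, vl0]
        refine ⟨?_, ?_⟩
        · split_ifs with hs
          · have := hminlt u hs
            omega
          · omega
        · split_ifs with hs
          · have := hminlt v hs
            omega
          · omega
      · simp only [vmk1, vl1]
        exact ⟨Nat.zero_le _, Nat.zero_le _⟩
      · simp only [vmk2, vl2]
        refine ⟨?_, ?_⟩
        · split_ifs with hs
          · exact hinfA u hs
          · exact Nat.zero_le _
        · split_ifs with hs
          · exact hinfA v hs
          · exact Nat.zero_le _
      · simp only [vmk3, vl3]
        refine ⟨?_, ?_⟩
        · split_ifs with hs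
          · exact hinfB u hs
          · exact Nat.zero_le _
        · split_ifs with hs
          · exact hinfB v hs
          · exact Nat.zero_le _
end
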